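/- Let p ≥ 2, let ψ_2, …, ψ_p, φ : ℝ → ℝ be differentiable, and u_2, …, u_p : ℝ → ℝ differentiable, satisfying ψ_r' = ψ_r (φ − ψ_r), u_r' = −ψ_r u_r, and ∑_{r=2}^{p} ψ_r u_r = 0 identically. Then for every m ≥ 1, ∑_{r=2}^{p} ψ_r^m u_r = 0 identically. -/

import Mathlib

/-! Write `S_m = ∑ ψ_r^m u_r`. The two differential equations give
`S_m' = m φ S_m - (m + 1) S_{m+1}`, so if `S_m` vanishes identically then so does its derivative,
and hence `S_{m+1}`; induct from `S_1 = 0`. -/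

open Finset

section Riccati

variable {ι : Type*} {s : Finset ι} {ψ u : ι → ℝ → ℝ} {φ : ℝ → ℝ}

theorem hasDerivAt_pow_mul_of_riccati {f g : ℝ → ℝ} {t : ℝ} (m : ℕ)
    (hf : HasDerivAt f (f t * (φ t - f t)) t) (hg : HasDerivAt g (-(f t * g t)) t) :
    HasDerivAt (fun x => f x ^ m * g x)
      (m * φ t * (f t ^ m * g t) - (m + 1) * (f t ^ (m + 1) * g t)) t := by
  refine ((hf.fun_pow m).fun_mul hg).congr_deriv ?_
  cases m with
  | zero => simp
  | succ n => rw [Nat.add_sub_cancel]; push_cast; ring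

theorem hasDerivAt_sum_pow_mul_of_riccati (m : ℕ) (t : ℝ)
    (hψ : ∀ i ∈ s, HasDerivAt (ψ i) (ψ i t * (φ t - ψ i t)) t)
    (hu : ∀ i ∈ s, HasDerivAt (u i) (-(ψ i t * u i t)) t) :
    HasDerivAt (fun x => ∑ i ∈ s, ψ i x ^ m * u i x)
      (m * φ t * ∑ i ∈ s, ψ i t ^ m * u i t
        - (m + 1) * ∑ i ∈ s, ψ i t ^ (m + 1) * u i t) t := by
  rw [mul_sum, mul_sum, ← sum_sub_distrib]
  exact HasDerivAt.fun_sum fun i hi => hasDerivAt_pow_mul_of_riccati m (hψ i hi) (hu i hi)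

theorem sum_pow_succ_mul_eq_zero
    (hψ : ∀ i ∈ s, ∀ t, HasDerivAt (ψ i) (ψ i t * (φ t - ψ i t)) t)
    (hu : ∀ i ∈ s, ∀ t, HasDerivAt (u i) (-(ψ i t * u i t)) t) {m : ℕ}
    (hm : ∀ t, ∑ i ∈ s, ψ i t ^ m * u i t = 0) (t : ℝ) :
    ∑ i ∈ s, ψ i t ^ (m + 1) * u i t = 0 := by
  have hderiv := hasDerivAt_sum_pow_mul_of_riccati m t (fun i hi => hψ i hi t)
    (fun i hi => hu i hi t)
  rw [funext hm, hm t, mul_zero, zero_sub] at hderiv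
  have hzero := hderiv.unique (hasDerivAt_const t 0)
  rwa [neg_eq_zero, mul_eq_zero, or_iff_right (by positivity)] at hzero

theorem sum_pow_mul_eq_zero_of_sum_mul_eq_zero
    (hψ : ∀ i ∈ s, ∀ t, HasDerivAt (ψ i) (ψ i t * (φ t - ψ i t)) t)
    (hu : ∀ i ∈ s, ∀ t, HasDerivAt (u i) (-(ψ i t * u i t)) t)
    (h : ∀ t, ∑ i ∈ s, ψ i t * u i t = 0)
    {m : ℕ} (hm : 1 ≤ m) (t : ℝ) : ∑ i ∈ s, ψ i t ^ m * u i t = 0 := by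
  induction m, hm using Nat.le_induction generalizing t with
  | base => simpa using h t
  | succ m _ ih => exact sum_pow_succ_mul_eq_zero hψ hu ih t

end Riccati

theorem stmt15_general (p : ℕ) (ψ u : ℕ → ℝ → ℝ) (φ : ℝ → ℝ)
    (hψd : ∀ r, Differentiable ℝ (ψ r)) (hud : ∀ r, Differentiable ℝ (u r))
    (hψ' : ∀ r, 2 ≤ r → r ≤ p → ∀ t, deriv (ψ r) t = ψ r t * (φ t - ψ r t))
    (hu' : ∀ r, 2 ≤ r → r ≤ p → ∀ t, deriv (u r) t = -(ψ r t * u r t))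
    (hsum : ∀ t, ∑ r ∈ Finset.Icc 2 p, ψ r t * u r t = 0) :
    ∀ m : ℕ, 1 ≤ m → ∀ t, ∑ r ∈ Finset.Icc 2 p, (ψ r t) ^ m * u r t = 0 := by
  have hψ : ∀ r ∈ Icc 2 p, ∀ t, HasDerivAt (ψ r) (ψ r t * (φ t - ψ r t)) t := by
    intro r hr t
    rw [mem_Icc] at hr
    exact hψ' r hr.1 hr.2 t ▸ (hψd r t).hasDerivAt
  have hu : ∀ r ∈ Icc 2 p, ∀ t, HasDerivAt (u r) (-(ψ r t * u r t)) t := by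
    intro r hr t
    rw [mem_Icc] at hr
    exact hu' r hr.1 hr.2 t ▸ (hud r t).hasDerivAt
  exact fun m hm => sum_pow_mul_eq_zero_of_sum_mul_eq_zero hψ hu hsum hm

/-- The iterated differentiation argument of Lemma 3.3 generating the full
Vandermonde system (3.23): if `ψ_r' = ψ_r(φ − ψ_r)`, `u_r' = −ψ_r u_r` and
`∑ ψ_r u_r = 0` identically, then `∑ ψ_r^m u_r = 0` for every `m ≥ 1`. -/
theorem stmt15 (p : ℕ) (hp : 2 ≤ p) (ψ u : ℕ → ℝ → ℝ) (φ : ℝ → ℝ)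
    (hφd : Differentiable ℝ φ)
    (hψd : ∀ r, Differentiable ℝ (ψ r)) (hud : ∀ r, Differentiable ℝ (u r))
    (hψ' : ∀ r, 2 ≤ r → r ≤ p → ∀ t, deriv (ψ r) t = ψ r t * (φ t - ψ r t))
    (hu' : ∀ r, 2 ≤ r → r ≤ p → ∀ t, deriv (u r) t = -(ψ r t * u r t))
    (hsum : ∀ t, ∑ r ∈ Finset.Icc 2 p, ψ r t * u r t = 0) :
    ∀ m : ℕ, 1 ≤ m → ∀ t, ∑ r ∈ Finset.Icc 2 p, (ψ r t) ^ m * u r t = 0 :=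
  stmt15_general p ψ u φ hψd hud hψ' hu' hsum
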